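/- Conservativity of the 2-D post-processing: For all N_x, N_y ≥ 2, Δx, Δy > 0, cell averages Ū*_{j,k} ∈ ℝ and interface inputs U*_{j+1/2,k}, U*_{j,k+1/2} ∈ ℝ indexed periodically by (j,k) ∈ (ℤ/N_xℤ)×(ℤ/N_yℤ), both the xy sub-post-processing output Ū^{xy}_{j,k} and the yx sub-post-processing output Ū^{yx}_{j,k} satisfy ∑_{j,k} Ū^{xy}_{j,k} = ∑_{j,k} Ū*_{j,k} and ∑_{j,k} Ū^{yx}_{j,k} = ∑_{j,k} Ū*_{j,k}; consequently the averaged post-processed cell averages Ū_{j,k}(t+Δt) := ½(Ū^{xy}_{j,k} + Ū^{yx}_{j,k}) satisfy ∑_{j,k} Ū_{j,k}(t+Δt) = ∑_{j,k} Ū*_{j,k}. -/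
import Mathlib


/-- The minmod function of two real numbers: the minimum if both are positive,
the maximum if both are negative, and `0` otherwise. -/
noncomputable def minmod2 (c₁ c₂ : ℝ) : ℝ :=
  if 0 < c₁ ∧ 0 < c₂ then min c₁ c₂
  else if c₁ < 0 ∧ c₂ < 0 then max c₁ c₂
  else 0

/-- Slope of the 1-D sweep: `(U_x)_j = 2·minmod((W_j − U*_{j−1/2})/Δ, (U*_{j+1/2} − W_j)/Δ)`,
where `W j` are cell averages and `Uh j = U*_{j+1/2}` interface values. -/
noncomputable def sweepSlope {N : ℕ} (Δ : ℝ) (W Uh : ZMod N → ℝ) (j : ZMod N) : ℝ :=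
  2 * minmod2 ((W j - Uh (j - 1)) / Δ) ((Uh j - W j) / Δ)

/-- One-sided value `U^{−}_{j+1/2} = W_j + (Δ/2)(U_x)_j`. -/
noncomputable def sweepUminus {N : ℕ} (Δ : ℝ) (W Uh : ZMod N → ℝ) (j : ZMod N) : ℝ :=
  W j + Δ / 2 * sweepSlope Δ W Uh j

/-- One-sided value `U^{+}_{j+1/2} = W_{j+1} − (Δ/2)(U_x)_{j+1}`. -/
noncomputable def sweepUplus {N : ℕ} (Δ : ℝ) (W Uh : ZMod N → ℝ) (j : ZMod N) : ℝ :=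
  W (j + 1) - Δ / 2 * sweepSlope Δ W Uh (j + 1)

/-- Corrected interface value `U**_{j+1/2} = ½(U^{−}_{j+1/2} + U^{+}_{j+1/2})`. -/
noncomputable def sweepUstarstar {N : ℕ} (Δ : ℝ) (W Uh : ZMod N → ℝ) (j : ZMod N) : ℝ :=
  (sweepUminus Δ W Uh j + sweepUplus Δ W Uh j) / 2

/-- Output cell average of the 1-D sweep: `½(U**_{j−1/2} + U**_{j+1/2})`. -/
noncomputable def sweepOut {N : ℕ} (Δ : ℝ) (W Uh : ZMod N → ℝ) (j : ZMod N) : ℝ :=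
  (sweepUstarstar Δ W Uh (j - 1) + sweepUstarstar Δ W Uh j) / 2

/-- The sweep in the `x`-direction applied, for each fixed `k`, to the 2-D field `W`
with interface inputs `Ux j k = U*_{j+1/2,k}`. -/
noncomputable def xSweep {Nx Ny : ℕ} (Δx : ℝ) (Ux : ZMod Nx → ZMod Ny → ℝ)
    (W : ZMod Nx → ZMod Ny → ℝ) : ZMod Nx → ZMod Ny → ℝ :=
  fun j k => sweepOut Δx (fun j' => W j' k) (fun j' => Ux j' k) j

/-- The sweep in the `y`-direction applied, for each fixed `j`, to the 2-D field `W`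
with interface inputs `Uy j k = U*_{j,k+1/2}`. -/
noncomputable def ySweep {Nx Ny : ℕ} (Δy : ℝ) (Uy : ZMod Nx → ZMod Ny → ℝ)
    (W : ZMod Nx → ZMod Ny → ℝ) : ZMod Nx → ZMod Ny → ℝ :=
  fun j k => sweepOut Δy (fun k' => W j k') (fun k' => Uy j k') k


lemma sum_shift_add {N : ℕ} [NeZero N] (f : ZMod N → ℝ) :
    ∑ j : ZMod N, f (j + 1) = ∑ j : ZMod N, f j :=
  Fintype.sum_equiv (Equiv.addRight (1 : ZMod N)) _ _ (fun _ => rfl)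

lemma sum_shift_sub {N : ℕ} [NeZero N] (f : ZMod N → ℝ) :
    ∑ j : ZMod N, f (j - 1) = ∑ j : ZMod N, f j :=
  Fintype.sum_equiv (Equiv.subRight (1 : ZMod N)) _ _ (fun _ => rfl)

lemma sum_sweepOut {N : ℕ} [NeZero N] (Δ : ℝ) (W Uh : ZMod N → ℝ) :
    ∑ j : ZMod N, sweepOut Δ W Uh j = ∑ j : ZMod N, W j := by
  have h1 : ∑ j : ZMod N, sweepUstarstar Δ W Uh j = ∑ j : ZMod N, W j := by
    simp only [sweepUstarstar, sweepUminus, sweepUplus]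
    rw [← Finset.sum_div]
    have := sum_shift_add (fun j => W j - Δ / 2 * sweepSlope Δ W Uh j)
    rw [show (∑ j : ZMod N, (W j + Δ / 2 * sweepSlope Δ W Uh j +
        (W (j + 1) - Δ / 2 * sweepSlope Δ W Uh (j + 1)))) =
        (∑ j : ZMod N, (W j + Δ / 2 * sweepSlope Δ W Uh j)) +
        ∑ j : ZMod N, (fun j => W j - Δ / 2 * sweepSlope Δ W Uh j) (j + 1)
      from Finset.sum_add_distrib, this, ← Finset.sum_add_distrib]
    rw [Finset.sum_congr rfl (fun j _ => show W j + Δ / 2 * sweepSlope Δ W Uh j +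
        (W j - Δ / 2 * sweepSlope Δ W Uh j) = 2 * W j from by ring), ← Finset.mul_sum]
    ring
  calc ∑ j : ZMod N, sweepOut Δ W Uh j
      = ((∑ j : ZMod N, (fun j => sweepUstarstar Δ W Uh j) (j - 1)) +
        ∑ j : ZMod N, sweepUstarstar Δ W Uh j) / 2 := by
        simp only [sweepOut]; rw [← Finset.sum_div, Finset.sum_add_distrib]
    _ = ∑ j : ZMod N, W j := by rw [sum_shift_sub, h1]; ring

lemma sum_xSweep {Nx Ny : ℕ} [NeZero Nx] [NeZero Ny] (Δx : ℝ)
    (Ux V : ZMod Nx → ZMod Ny → ℝ) :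
    ∑ j : ZMod Nx, ∑ k : ZMod Ny, xSweep Δx Ux V j k =
      ∑ j : ZMod Nx, ∑ k : ZMod Ny, V j k := by
  rw [Finset.sum_comm]
  simp only [xSweep]
  rw [Finset.sum_congr rfl (fun k _ =>
    sum_sweepOut Δx (fun j' => V j' k) (fun j' => Ux j' k))]
  exact Finset.sum_comm

lemma sum_ySweep {Nx Ny : ℕ} [NeZero Nx] [NeZero Ny] (Δy : ℝ)
    (Uy V : ZMod Nx → ZMod Ny → ℝ) :
    ∑ j : ZMod Nx, ∑ k : ZMod Ny, ySweep Δy Uy V j k =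
      ∑ j : ZMod Nx, ∑ k : ZMod Ny, V j k :=
  Finset.sum_congr rfl (fun j _ =>
    sum_sweepOut Δy (fun k' => V j k') (fun k' => Uy j k'))

/-- Conservativity of the 2-D post-processing: both the `xy` and the `yx`
sub-post-processings conserve the total sum of the cell averages, and hence so does
their average, the post-processed cell average `Ū_{j,k}(t+Δt)`. -/
theorem postprocessing2D_conservative (Nx Ny : ℕ) [NeZero Nx] [NeZero Ny]
    (hNx : 2 ≤ Nx) (hNy : 2 ≤ Ny) (Δx Δy : ℝ) (hΔx : 0 < Δx) (hΔy : 0 < Δy)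
    (Ubar Ux Uy : ZMod Nx → ZMod Ny → ℝ) :
    (∑ j : ZMod Nx, ∑ k : ZMod Ny, ySweep Δy Uy (xSweep Δx Ux Ubar) j k =
        ∑ j : ZMod Nx, ∑ k : ZMod Ny, Ubar j k) ∧
    (∑ j : ZMod Nx, ∑ k : ZMod Ny, xSweep Δx Ux (ySweep Δy Uy Ubar) j k =
        ∑ j : ZMod Nx, ∑ k : ZMod Ny, Ubar j k) ∧
    (∑ j : ZMod Nx, ∑ k : ZMod Ny,
        (ySweep Δy Uy (xSweep Δx Ux Ubar) j k + xSweep Δx Ux (ySweep Δy Uy Ubar) j k) / 2 =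
        ∑ j : ZMod Nx, ∑ k : ZMod Ny, Ubar j k) := by

  have hxy : ∑ j : ZMod Nx, ∑ k : ZMod Ny, ySweep Δy Uy (xSweep Δx Ux Ubar) j k =
      ∑ j : ZMod Nx, ∑ k : ZMod Ny, Ubar j k := by
    rw [sum_ySweep, sum_xSweep]
  have hyx : ∑ j : ZMod Nx, ∑ k : ZMod Ny, xSweep Δx Ux (ySweep Δy Uy Ubar) j k =
      ∑ j : ZMod Nx, ∑ k : ZMod Ny, Ubar j k := by
    rw [sum_xSweep, sum_ySweep]
  refine ⟨hxy, hyx, ?_⟩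
  simp only [div_eq_mul_inv, Finset.sum_add_distrib, ← Finset.sum_mul]
  rw [hxy, hyx]
  ring
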